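/- Let K, L be star bodies in ℝⁿ and φ, ψ : (0,∞) → (0,∞) continuous, with ψ invertible and H = φ ∘ ψ⁻¹ convex. Then Ṽ_φ(K,L)/|K| ≥ H( Ṽ_ψ(K,L)/|K| ). If H is strictly convex, equality holds if and only if K and L are dilates of each other. -/

import Mathlib

noncomputable section

open Metric Set MeasureTheory Filter

/-- A star body about the origin in `ℝⁿ`, represented by its radial function,
which is continuous and positive on the unit sphere. -/
structure StarBody (n : ℕ) where
  ρ : EuclideanSpace ℝ (Fin n) → ℝ
  pos : ∀ u : EuclideanSpace ℝ (Fin n), ‖u‖ = 1 → 0 < ρ u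
  cont : ContinuousOn ρ (sphere (0 : EuclideanSpace ℝ (Fin n)) 1)

/-- `M` is the Orlicz `φ`-radial addition `K +̃_φ L`, i.e.
`φ(ρ_M(u)/ρ_K(u), ρ_M(u)/ρ_L(u)) = 1` for all `u` on the unit sphere. -/
def IsOrliczSum {n : ℕ} (φ : ℝ → ℝ → ℝ) (K L M : StarBody n) : Prop :=
  ∀ u : EuclideanSpace ℝ (Fin n), ‖u‖ = 1 →
    φ (M.ρ u / K.ρ u) (M.ρ u / L.ρ u) = 1

/-- The spherical Lebesgue measure on the unit sphere `S^{n-1}`. -/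
def sphereMeasure (n : ℕ) : Measure (sphere (0 : EuclideanSpace ℝ (Fin n)) 1) :=
  (volume : Measure (EuclideanSpace ℝ (Fin n))).toSphere

/-- The volume of a star body via the polar coordinate formula
`|K| = (1/n) ∫_{S^{n-1}} ρ_K(u)ⁿ dσ(u)`. -/
def StarBody.vol {n : ℕ} (K : StarBody n) : ℝ :=
  (1 / (n : ℝ)) * ∫ u : sphere (0 : EuclideanSpace ℝ (Fin n)) 1,
    (K.ρ u) ^ n ∂(sphereMeasure n)

/-- The Orlicz `L_φ`-dual mixed volume
`Ṽ_φ(K,L) = (1/n) ∫_{S^{n-1}} φ(ρ_K(u)/ρ_L(u)) ρ_K(u)ⁿ dσ(u)`. -/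
def dualMixedVolume {n : ℕ} (φ : ℝ → ℝ) (K L : StarBody n) : ℝ :=
  (1 / (n : ℝ)) * ∫ u : sphere (0 : EuclideanSpace ℝ (Fin n)) 1,
    φ (K.ρ u / L.ρ u) * (K.ρ u) ^ n ∂(sphereMeasure n)

/-!
Both sides are averages against the probability measure `ρ_Kⁿ dσ / (n |K|)` on the sphere:
with `r = ρ_K / ρ_L`, `Ṽ_ψ(K,L)/|K|` is the average of `ψ ∘ r` and `Ṽ_φ(K,L)/|K|` that of
`φ ∘ r = H ∘ ψ ∘ r`, so the inequality is Jensen's inequality for `H`. Jensen needs `H` continuous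
on a closed convex set containing the values of `ψ ∘ r`: since `r` is continuous and positive on
the compact sphere, these lie in `ψ '' [min r, max r]`, a compact interval on which `ψ⁻¹`, and
hence `H = φ ∘ ψ⁻¹`, is continuous. For strictly convex `H`, equality forces `ψ ∘ r` to be a.e.
constant; `ρ_Kⁿ dσ` charges every open set, so `ψ ∘ r`, and then `r`, is constant.
-/

theorem IsCompact.continuousOn_image_of_leftInvOn {X Y : Type*} [TopologicalSpace X]
    [TopologicalSpace Y] [T2Space Y] {f : X → Y} {g : Y → X} {s : Set X}
    (hs : IsCompact s) (hf : ContinuousOn f s) (hgf : LeftInvOn g f s) :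
    ContinuousOn g (f '' s) := by
  refine continuousOn_iff_isClosed.2 fun t ht =>
    ⟨f '' (s ∩ t), ((hs.inter_right ht).image_of_continuousOn
      (hf.mono inter_subset_left)).isClosed, ?_⟩
  ext y
  constructor
  · rintro ⟨hyt, x, hx, rfl⟩
    refine ⟨⟨x, ⟨hx, ?_⟩, rfl⟩, x, hx, rfl⟩
    rwa [mem_preimage, hgf hx] at hyt
  · rintro ⟨⟨x, ⟨hx, hxt⟩, rfl⟩, -⟩
    exact ⟨by rwa [mem_preimage, hgf hx], x, hx, rfl⟩

section Jensen

variable {φ ψ ψinv H : ℝ → ℝ} {S : Set ℝ}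

theorem continuousOn_image_of_eqOn_comp {A : Set ℝ} (hA : IsCompact A) (hAS : A ⊆ S)
    (hφc : ContinuousOn φ S) (hψc : ContinuousOn ψ S) (hinv : LeftInvOn ψinv ψ S)
    (hH : EqOn H (φ ∘ ψinv) (ψ '' S)) :
    ContinuousOn H (ψ '' A) :=
  ((hφc.mono hAS).comp (hA.continuousOn_image_of_leftInvOn (hψc.mono hAS) (hinv.mono hAS))
    ((hinv.mono hAS).mapsTo (surjOn_image ψ A))).congr fun _ hy => hH (image_mono hAS hy)

theorem apply_eq_of_eqOn_comp (hinv : LeftInvOn ψinv ψ S) (hH : EqOn H (φ ∘ ψinv) (ψ '' S))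
    {t : ℝ} (ht : t ∈ S) : H (ψ t) = φ t := by
  rw [hH (mem_image_of_mem ψ ht), Function.comp_apply, hinv ht]

variable {X : Type*} [TopologicalSpace X] [CompactSpace X] [Nonempty X]

theorem exists_isClosed_convex_continuousOn_mem (hS : Convex ℝ S)
    (hφc : ContinuousOn φ S) (hψc : ContinuousOn ψ S) (hinv : LeftInvOn ψinv ψ S)
    (hH : EqOn H (φ ∘ ψinv) (ψ '' S)) {r : X → ℝ} (hr : Continuous r) (hrS : ∀ x, r x ∈ S) :
    ∃ J ⊆ ψ '' S, IsClosed J ∧ Convex ℝ J ∧ ContinuousOn H J ∧ ∀ x, ψ (r x) ∈ J := by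
  obtain ⟨xmin, -, hxmin⟩ := isCompact_univ.exists_isMinOn univ_nonempty hr.continuousOn
  obtain ⟨xmax, -, hxmax⟩ := isCompact_univ.exists_isMaxOn univ_nonempty hr.continuousOn
  have hAS : Icc (r xmin) (r xmax) ⊆ S := hS.ordConnected.out (hrS xmin) (hrS xmax)
  exact ⟨ψ '' Icc (r xmin) (r xmax), image_mono hAS,
    (isCompact_Icc.image_of_continuousOn (hψc.mono hAS)).isClosed,
    (isPreconnected_Icc.image _ (hψc.mono hAS)).convex,
    continuousOn_image_of_eqOn_comp isCompact_Icc hAS hφc hψc hinv hH,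
    fun x => mem_image_of_mem ψ ⟨hxmin (mem_univ x), hxmax (mem_univ x)⟩⟩

variable [MeasurableSpace X] [OpensMeasurableSpace X]
  (μ : Measure X) [IsFiniteMeasure μ] [NeZero μ]

theorem map_average_comp_le (hS : Convex ℝ S)
    (hφc : ContinuousOn φ S) (hψc : ContinuousOn ψ S) (hinv : LeftInvOn ψinv ψ S)
    (hH : EqOn H (φ ∘ ψinv) (ψ '' S)) (hHconv : ConvexOn ℝ (ψ '' S) H)
    {r : X → ℝ} (hr : Continuous r) (hrS : ∀ x, r x ∈ S) :
    H (⨍ x, ψ (r x) ∂μ) ≤ ⨍ x, φ (r x) ∂μ := by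
  obtain ⟨J, hJS, hJclosed, hJconv, hHJ, hrJ⟩ :=
    exists_isClosed_convex_continuousOn_mem hS hφc hψc hinv hH hr hrS
  have hψr := hψc.comp_continuous hr hrS
  simpa only [Function.comp_apply, apply_eq_of_eqOn_comp hinv hH (hrS _)] using
    (hHconv.subset hJS hJconv).map_average_le hHJ hJclosed (.of_forall hrJ)
      (hψr.integrable_of_hasCompactSupport (.of_compactSpace _))
      ((hHJ.comp_continuous hψr hrJ).integrable_of_hasCompactSupport (.of_compactSpace _))

theorem map_average_comp_eq_iff [μ.IsOpenPosMeasure] (hS : Convex ℝ S)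
    (hφc : ContinuousOn φ S) (hψc : ContinuousOn ψ S) (hinv : LeftInvOn ψinv ψ S)
    (hH : EqOn H (φ ∘ ψinv) (ψ '' S)) (hHconv : StrictConvexOn ℝ (ψ '' S) H)
    {r : X → ℝ} (hr : Continuous r) (hrS : ∀ x, r x ∈ S) :
    H (⨍ x, ψ (r x) ∂μ) = ⨍ x, φ (r x) ∂μ ↔ ∃ c, ∀ x, r x = c := by
  obtain ⟨J, hJS, hJclosed, hJconv, hHJ, hrJ⟩ :=
    exists_isClosed_convex_continuousOn_mem hS hφc hψc hinv hH hr hrS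
  have hψr := hψc.comp_continuous hr hrS
  constructor
  · intro heq
    rcases (hHconv.subset hJS hJconv).ae_eq_const_or_map_average_lt hHJ hJclosed
      (.of_forall hrJ) (hψr.integrable_of_hasCompactSupport (μ := μ) (.of_compactSpace _))
      ((hHJ.comp_continuous hψr hrJ).integrable_of_hasCompactSupport (.of_compactSpace _))
      with hconst | hlt
    · refine ⟨ψinv (⨍ x, ψ (r x) ∂μ), fun x => ?_⟩
      rw [← hinv (hrS x)]
      exact congrArg ψinv (congrFun ((hψr.ae_eq_iff_eq μ continuous_const).1 hconst) x)
    · simp only [apply_eq_of_eqOn_comp hinv hH (hrS _)] at hlt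
      exact absurd heq hlt.ne
  · rintro ⟨c, hc⟩
    have hcS : c ∈ S := hc (Classical.arbitrary X) ▸ hrS _
    simp only [hc, average_const]
    exact apply_eq_of_eqOn_comp hinv hH hcS

end Jensen

theorem average_withDensity_ofReal {X : Type*} [MeasurableSpace X] {μ : Measure X}
    {w : X → ℝ} (hw : Integrable w μ) (hw0 : 0 ≤ w) (f : X → ℝ) :
    ⨍ x, f x ∂μ.withDensity (fun x => ENNReal.ofReal (w x)) =
      (∫ x, f x * w x ∂μ) / ∫ x, w x ∂μ := by
  rw [average_eq, measureReal_def, withDensity_apply _ MeasurableSet.univ, Measure.restrict_univ,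
    ← ofReal_integral_eq_lintegral_ofReal hw (.of_forall hw0),
    ENNReal.toReal_ofReal (integral_nonneg hw0),
    integral_withDensity_eq_integral_toReal_smul₀ hw.aemeasurable.ennreal_ofReal
      (.of_forall fun _ => ENNReal.ofReal_lt_top)]
  simp only [ENNReal.toReal_ofReal (hw0 _), smul_eq_mul, mul_comm (w _)]
  rw [div_eq_inv_mul]

instance (n : ℕ) : IsFiniteMeasure (sphereMeasure n) :=
  inferInstanceAs (IsFiniteMeasure (volume.toSphere))

instance (n : ℕ) : (sphereMeasure n).IsOpenPosMeasure :=
  inferInstanceAs (volume.toSphere.IsOpenPosMeasure)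

namespace StarBody

variable {n : ℕ} (K L : StarBody n)

theorem pos_of_mem_sphere (u : sphere (0 : EuclideanSpace ℝ (Fin n)) 1) : 0 < K.ρ u :=
  K.pos u (mem_sphere_zero_iff_norm.1 u.2)

theorem continuous_restrict_sphere :
    Continuous fun u : sphere (0 : EuclideanSpace ℝ (Fin n)) 1 => K.ρ u :=
  K.cont.domRestrict

/-- `n` times the dual cone-volume measure of `K`. -/
def radialMeasure : Measure (sphere (0 : EuclideanSpace ℝ (Fin n)) 1) :=
  (sphereMeasure n).withDensity fun u => ENNReal.ofReal (K.ρ u ^ n)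

theorem integrable_ρ_pow : Integrable (fun u : sphere (0 : EuclideanSpace ℝ (Fin n)) 1 =>
    K.ρ u ^ n) (sphereMeasure n) :=
  (K.continuous_restrict_sphere.pow n).integrable_of_hasCompactSupport (.of_compactSpace _)

instance : IsFiniteMeasure K.radialMeasure :=
  isFiniteMeasure_withDensity_ofReal K.integrable_ρ_pow.hasFiniteIntegral

instance : K.radialMeasure.IsOpenPosMeasure := by
  refine (withDensity_absolutelyContinuous' ?_ (.of_forall fun u => ?_)).isOpenPosMeasure
  · exact (K.continuous_restrict_sphere.pow n).measurable.ennreal_ofReal.aemeasurable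
  · exact (ENNReal.ofReal_pos.2 (pow_pos (K.pos_of_mem_sphere u) n)).ne'

theorem dualMixedVolume_div_vol (hn : 0 < n) (φ : ℝ → ℝ) :
    dualMixedVolume φ K L / K.vol = ⨍ u, φ (K.ρ u / L.ρ u) ∂K.radialMeasure := by
  rw [radialMeasure, average_withDensity_ofReal K.integrable_ρ_pow
    (fun u => (pow_pos (K.pos_of_mem_sphere u) n).le), dualMixedVolume, vol,
    mul_div_mul_left _ _ (one_div_ne_zero (Nat.cast_ne_zero.2 hn.ne'))]

theorem exists_forall_ρ_div_eq_iff [Nonempty (sphere (0 : EuclideanSpace ℝ (Fin n)) 1)] :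
    (∃ c, ∀ u : sphere (0 : EuclideanSpace ℝ (Fin n)) 1, K.ρ u / L.ρ u = c) ↔
      ∃ lam : ℝ, 0 < lam ∧
        ∀ u : EuclideanSpace ℝ (Fin n), ‖u‖ = 1 → L.ρ u = lam * K.ρ u := by
  constructor
  · rintro ⟨c, hc⟩
    have hc0 : 0 < c := hc (Classical.arbitrary _) ▸
      div_pos (K.pos_of_mem_sphere _) (L.pos_of_mem_sphere _)
    refine ⟨c⁻¹, inv_pos.2 hc0, fun u hu => ?_⟩
    have := hc ⟨u, mem_sphere_zero_iff_norm.2 hu⟩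
    rw [div_eq_iff (L.pos u hu).ne'] at this
    rw [this, inv_mul_cancel_left₀ hc0.ne']
  · rintro ⟨lam, -, hL⟩
    refine ⟨lam⁻¹, fun u => ?_⟩
    rw [hL u (mem_sphere_zero_iff_norm.1 u.2), div_mul_eq_div_div_swap,
      div_self (K.pos_of_mem_sphere u).ne', one_div]

end StarBody

theorem dual_mixed_volume_compare_general {n : ℕ} (hn : 0 < n)
    (φ ψ ψinv H : ℝ → ℝ)
    (hφc : ContinuousOn φ (Set.Ioi 0))
    (hψc : ContinuousOn ψ (Set.Ioi 0))
    (hinv : ∀ t : ℝ, 0 < t → ψinv (ψ t) = t)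
    (hH : ∀ s : ℝ, s ∈ ψ '' Set.Ioi 0 → H s = φ (ψinv s))
    (hHconv : ConvexOn ℝ (ψ '' Set.Ioi 0) H)
    (K L : StarBody n) :
    H (dualMixedVolume ψ K L / K.vol) ≤ dualMixedVolume φ K L / K.vol ∧
      (StrictConvexOn ℝ (ψ '' Set.Ioi 0) H →
        (H (dualMixedVolume ψ K L / K.vol) = dualMixedVolume φ K L / K.vol ↔
          ∃ lam : ℝ, 0 < lam ∧
            ∀ u : EuclideanSpace ℝ (Fin n), ‖u‖ = 1 → L.ρ u = lam * K.ρ u)) := by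
  have : NeZero n := ⟨hn.ne'⟩
  have : Nonempty (sphere (0 : EuclideanSpace ℝ (Fin n)) 1) :=
    (NormedSpace.sphere_nonempty.2 zero_le_one).to_subtype
  have hr : Continuous fun u : sphere (0 : EuclideanSpace ℝ (Fin n)) 1 => K.ρ u / L.ρ u :=
    K.continuous_restrict_sphere.div L.continuous_restrict_sphere
      fun u => (L.pos_of_mem_sphere u).ne'
  have hr0 : ∀ u : sphere (0 : EuclideanSpace ℝ (Fin n)) 1, K.ρ u / L.ρ u ∈ Ioi (0 : ℝ) :=
    fun u => div_pos (K.pos_of_mem_sphere u) (L.pos_of_mem_sphere u)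
  rw [K.dualMixedVolume_div_vol L hn, K.dualMixedVolume_div_vol L hn]
  exact ⟨map_average_comp_le _ (convex_Ioi 0) hφc hψc hinv hH hHconv hr hr0, fun hHs =>
    (map_average_comp_eq_iff _ (convex_Ioi 0) hφc hψc hinv hH hHs hr hr0).trans
      (K.exists_forall_ρ_div_eq_iff L)⟩

/-- Comparison of dual mixed volumes via Jensen's inequality: if `H = φ ∘ ψ⁻¹`
is convex then `Ṽ_φ(K,L)/|K| ≥ H(Ṽ_ψ(K,L)/|K|)`, with equality (for strictly
convex `H`) iff `K` and `L` are dilates. -/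
theorem dual_mixed_volume_compare {n : ℕ} (hn : 0 < n)
    (φ ψ ψinv H : ℝ → ℝ)
    (hφc : ContinuousOn φ (Set.Ioi 0)) (hφp : ∀ t : ℝ, 0 < t → 0 < φ t)
    (hψc : ContinuousOn ψ (Set.Ioi 0)) (hψp : ∀ t : ℝ, 0 < t → 0 < ψ t)
    (hinv : ∀ t : ℝ, 0 < t → ψinv (ψ t) = t)
    (hH : ∀ s : ℝ, s ∈ ψ '' Set.Ioi 0 → H s = φ (ψinv s))
    (hHconv : ConvexOn ℝ (ψ '' Set.Ioi 0) H)
    (K L : StarBody n) :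
    H (dualMixedVolume ψ K L / K.vol) ≤ dualMixedVolume φ K L / K.vol ∧
      (StrictConvexOn ℝ (ψ '' Set.Ioi 0) H →
        (H (dualMixedVolume ψ K L / K.vol) = dualMixedVolume φ K L / K.vol ↔
          ∃ lam : ℝ, 0 < lam ∧
            ∀ u : EuclideanSpace ℝ (Fin n), ‖u‖ = 1 → L.ρ u = lam * K.ρ u)) :=
  dual_mixed_volume_compare_general hn φ ψ ψinv H hφc hψc hinv hH hHconv K L
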